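/- arXiv:2302.00822 — 2 statements merged into one kernel-verified Lean document; each statement's English description precedes it below -/
import Mathlib

section
/- Let X₁, …, Xₙ be real random variables with E[e^{|Xᵢ|}] < ∞ for each i. Then for every p ∈ [1,∞) there is a constant C = C(p) < ∞ such that E[max_{1≤i≤n} |Xᵢ|^p] ≤ C·((p−1)^p + (log(∑_{i=1}^n E[e^{|Xᵢ|}]))^p). -/
/-!
Put `S = ∑ᵢ E[e^{|Xᵢ|}]` and `s = log S ≥ 0`. If `x ↦ x^p` is dominated on `[0,∞)` by
`a + b·e^{x-s}`, then so is `maxᵢ |Xᵢ|^p` by `a + b·e^{-s} ∑ᵢ e^{|Xᵢ|}`, whose expectation is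
`a + b`. For `p = 1` the bound `x ≤ (s - 1) + e^{x-s}` gives `E[maxᵢ |Xᵢ|] ≤ s`. For `p > 1`,
`x^p ≤ 2^p s^p + 2^p ⌈p⌉! e^{x-s}` (according as `x ≤ 2s` or not) gives
`E[maxᵢ |Xᵢ|^p] ≤ 2^p (s^p + ⌈p⌉!)`, and the constant `2^p ⌈p⌉!` is absorbed by `(p-1)^p > 0`.
-/

open MeasureTheory Real

lemma Real.rpow_le_factorial_ceil_mul_exp {p y : ℝ} (hp : 0 ≤ p) (hy : 0 ≤ y) :
    y ^ p ≤ ⌈p⌉₊.factorial * exp y := by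
  have hfac : (1 : ℝ) ≤ ⌈p⌉₊.factorial := by exact_mod_cast ⌈p⌉₊.factorial_pos
  rcases le_total y 1 with hy1 | hy1
  · calc y ^ p ≤ 1 := rpow_le_one hy hy1 hp
      _ ≤ ⌈p⌉₊.factorial * exp y := one_le_mul_of_one_le_of_one_le hfac (one_le_exp hy)
  · calc y ^ p ≤ y ^ (⌈p⌉₊ : ℝ) := rpow_le_rpow_of_exponent_le hy1 (Nat.le_ceil p)
      _ = y ^ ⌈p⌉₊ := rpow_natCast y _
      _ ≤ ⌈p⌉₊.factorial * exp y := by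
        rw [← div_le_iff₀' (by positivity)]
        exact pow_div_factorial_le_exp _ hy _

lemma Real.rpow_le_two_rpow_mul_add_exp_sub {p x t : ℝ} (hp : 0 ≤ p) (hx : 0 ≤ x) (ht : 0 ≤ t) :
    x ^ p ≤ 2 ^ p * t ^ p + 2 ^ p * ⌈p⌉₊.factorial * exp (x - t) := by
  have h2p : (0 : ℝ) < 2 ^ p := by positivity
  rcases le_total x (2 * t) with hxt | hxt
  · have hexp : 0 ≤ 2 ^ p * ⌈p⌉₊.factorial * exp (x - t) := by positivity
    calc x ^ p ≤ (2 * t) ^ p := rpow_le_rpow hx hxt hp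
      _ = 2 ^ p * t ^ p := mul_rpow zero_le_two ht
      _ ≤ _ := le_add_of_nonneg_right hexp
  · have hhalf : (x / 2) ^ p ≤ ⌈p⌉₊.factorial * exp (x - t) :=
      (rpow_le_factorial_ceil_mul_exp hp (by positivity)).trans <|
        mul_le_mul_of_nonneg_left (exp_le_exp.2 (by linarith)) (by positivity)
    calc x ^ p = 2 ^ p * (x / 2) ^ p := by
          rw [← mul_rpow zero_le_two (by positivity), mul_div_cancel₀ x two_ne_zero]
      _ ≤ 2 ^ p * (⌈p⌉₊.factorial * exp (x - t)) := mul_le_mul_of_nonneg_left hhalf h2p.le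
      _ ≤ _ := by rw [← mul_assoc]; exact le_add_of_nonneg_left (by positivity)

section MaxOfExponentiallyIntegrable

variable {Ω ι : Type*} [MeasurableSpace Ω] {μ : Measure Ω} [IsProbabilityMeasure μ]
  [Fintype ι] [Nonempty ι] {X : ι → Ω → ℝ}

lemma one_le_sum_integral_exp_abs (hX : ∀ i, Integrable (fun ω => exp |X i ω|) μ) :
    1 ≤ ∑ i, ∫ ω, exp |X i ω| ∂μ := by
  obtain ⟨i⟩ := ‹Nonempty ι›
  calc (1 : ℝ) = ∫ _, (1 : ℝ) ∂μ := by simp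
    _ ≤ ∫ ω, exp |X i ω| ∂μ :=
      integral_mono (integrable_const 1) (hX i) fun ω => one_le_exp (abs_nonneg _)
    _ ≤ ∑ i, ∫ ω, exp |X i ω| ∂μ :=
      Finset.single_le_sum (f := fun j => ∫ ω, exp |X j ω| ∂μ)
        (fun j _ => integral_nonneg fun ω => (exp_pos _).le) (Finset.mem_univ i)

lemma integral_iSup_rpow_abs_le {p a b : ℝ} (hb : 0 ≤ b)
    (hX : ∀ i, Integrable (fun ω => exp |X i ω|) μ)
    (h : ∀ x, 0 ≤ x → x ^ p ≤ a + b * exp (x - log (∑ i, ∫ ω, exp |X i ω| ∂μ))) :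
    ∫ ω, (⨆ i, |X i ω| ^ p) ∂μ ≤ a + b := by
  set S := ∑ i, ∫ ω, exp |X i ω| ∂μ
  have hS : 0 < S := zero_lt_one.trans_le (one_le_sum_integral_exp_abs hX)
  have hsum : Integrable (fun ω => ∑ i, exp |X i ω|) μ := integrable_finsetSum _ fun i _ => hX i
  have hdom : ∀ ω, ⨆ i, |X i ω| ^ p ≤ a + b / S * ∑ i, exp |X i ω| := fun ω =>
    ciSup_le fun i => calc
      |X i ω| ^ p ≤ a + b * exp (|X i ω| - log S) := h _ (abs_nonneg _)
      _ = a + b / S * exp |X i ω| := by rw [exp_sub, exp_log hS]; ring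
      _ ≤ a + b / S * ∑ i, exp |X i ω| := by
        gcongr
        exact Finset.single_le_sum (f := fun j => exp |X j ω|) (fun j _ => (exp_pos _).le)
          (Finset.mem_univ i)
  calc ∫ ω, (⨆ i, |X i ω| ^ p) ∂μ ≤ ∫ ω, (a + b / S * ∑ i, exp |X i ω|) ∂μ :=
        integral_mono_of_nonneg
          (.of_forall fun ω => Real.iSup_nonneg fun i => rpow_nonneg (abs_nonneg _) p)
          ((integrable_const a).add (hsum.const_mul _)) (.of_forall hdom)
    _ = a + b := by
      rw [integral_add (integrable_const a) (hsum.const_mul _), integral_const_mul,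
        integral_finsetSum _ fun i _ => hX i, div_mul_cancel₀ b hS.ne']
      simp

end MaxOfExponentiallyIntegrable

/-- For every `p ∈ [1,∞)` there is `C = C(p)` such that for any finitely many random
variables with `E[e^{|Xᵢ|}] < ∞`,
`E[maxᵢ |Xᵢ|^p] ≤ C ((p−1)^p + (log ∑ᵢ E[e^{|Xᵢ|}])^p)`. -/
theorem stmt4 (p : ℝ) (hp : 1 ≤ p) :
    ∃ C : ℝ, ∀ (Ω : Type) (_ : MeasurableSpace Ω) (μ : Measure Ω)
      (_ : IsProbabilityMeasure μ) (n : ℕ) (_ : 0 < n) (X : Fin n → Ω → ℝ),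
      (∀ i, Integrable (fun ω => Real.exp |X i ω|) μ) →
      ∫ ω, (⨆ i, |X i ω| ^ p) ∂μ ≤
        C * ((p - 1) ^ p + (Real.log (∑ i, ∫ ω, Real.exp |X i ω| ∂μ)) ^ p) := by
  obtain rfl | hp1 := hp.eq_or_lt
  · refine ⟨1, fun Ω _ μ _ n hn X hX => ?_⟩
    have : Nonempty (Fin n) := ⟨⟨0, hn⟩⟩
    have hbound := integral_iSup_rpow_abs_le (p := 1) (a := log (∑ i, ∫ ω, exp |X i ω| ∂μ) - 1)
      zero_le_one hX fun x _ => by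
        rw [rpow_one, one_mul]
        linarith [add_one_le_exp (x - log (∑ i, ∫ ω, exp |X i ω| ∂μ))]
    simpa using hbound
  · set K : ℝ := 2 ^ p * ⌈p⌉₊.factorial
    set C := max (2 ^ p) (K / (p - 1) ^ p)
    have hq : 0 < (p - 1) ^ p := rpow_pos_of_pos (sub_pos.2 hp1) p
    have hK : K ≤ C * (p - 1) ^ p := (div_le_iff₀ hq).1 (le_max_right _ _)
    refine ⟨C, fun Ω _ μ _ n hn X hX => ?_⟩
    have : Nonempty (Fin n) := ⟨⟨0, hn⟩⟩
    set s := log (∑ i, ∫ ω, exp |X i ω| ∂μ)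
    have hs : 0 ≤ s := log_nonneg (one_le_sum_integral_exp_abs hX)
    have hbound := integral_iSup_rpow_abs_le (a := 2 ^ p * s ^ p) (b := K) (by positivity) hX
      fun x hx => rpow_le_two_rpow_mul_add_exp_sub (by linarith) hx hs
    have hs' : 2 ^ p * s ^ p ≤ C * s ^ p :=
      mul_le_mul_of_nonneg_right (le_max_left _ _) (rpow_nonneg hs p)
    linarith
end

section
/- Let (Gₙ) be nonnegative reals with G_{n+1} ≤ θₙ Gₙ + C e^{−κn/2} where θₙ := 1 − 1/(C(n+1)^{3α}) for constants C ≥ 1, κ > 0, α ∈ (0,1/3), and assume e^{−κ/2} ≤ θ₀ ≤ θₙ for all n and G₀ ≤ C. Then there exist constants c > 0 and C' < ∞ (depending on C, κ, α) such that Gₙ ≤ C' exp(−c n^{1−3α}) for all n ∈ N. -/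
/-!
Write `θₖ` for the contraction factors and `Pₙ = ∏_{k<n} θₖ`. Since `e^{−κ/2} ≤ θₖ`, the forcing
term `C e^{−κn/2}` is at most `C e^{κ/2} P_{n+1}`, and unrolling the recursion gives
`Gₙ ≤ (n+1) C e^{κ/2} Pₙ`. By `1 − x ≤ e^{−x}` and `(k+1)^{−3α} ≥ n^{−3α}` for `k < n`,
`Pₙ ≤ exp(−n^{1−3α}/C)`; half of this decay absorbs the factor `n + 1`.
-/

open Real Finset Filter Topology

theorem le_succ_mul_mul_prod_of_le_mul_add {θ G : ℕ → ℝ} {D : ℝ} (hθ : ∀ n, 0 ≤ θ n)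
    (h0 : G 0 ≤ D) (hrec : ∀ n, G (n + 1) ≤ θ n * G n + D * ∏ k ∈ range (n + 1), θ k) (n : ℕ) :
    G n ≤ (n + 1) * D * ∏ k ∈ range n, θ k := by
  induction n with
  | zero => simpa using h0
  | succ n ih =>
    calc G (n + 1) ≤ θ n * ((n + 1) * D * ∏ k ∈ range n, θ k) + D * ∏ k ∈ range (n + 1), θ k :=
          (hrec n).trans (by gcongr; exact hθ n)
      _ = ((n + 1 : ℕ) + 1) * D * ∏ k ∈ range (n + 1), θ k := by
          rw [prod_range_succ]; push_cast; ring

theorem exp_neg_mul_le_prod {θ : ℕ → ℝ} {a : ℝ} (h : ∀ k, exp (-a) ≤ θ k) (n : ℕ) :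
    exp (-a * n) ≤ ∏ k ∈ range n, θ k := by
  calc exp (-a * n) = ∏ _k ∈ range n, exp (-a) := by
        rw [prod_const, card_range, ← exp_nat_mul, mul_comm]
    _ ≤ ∏ k ∈ range n, θ k := prod_le_prod (fun _ _ => (exp_pos _).le) (fun k _ => h k)

theorem prod_one_sub_le_exp_neg_sum {ι : Type*} (s : Finset ι) {a : ι → ℝ}
    (ha : ∀ i ∈ s, a i ≤ 1) : ∏ i ∈ s, (1 - a i) ≤ exp (-∑ i ∈ s, a i) := by
  rw [← sum_neg_distrib, exp_sum]
  exact prod_le_prod (fun i hi => sub_nonneg.2 (ha i hi)) (fun i _ => one_sub_le_exp_neg _)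

theorem rpow_one_sub_le_sum_rpow_neg {γ : ℝ} (hγ0 : 0 ≤ γ) (hγ1 : γ < 1) (n : ℕ) :
    (n : ℝ) ^ (1 - γ) ≤ ∑ k ∈ range n, ((k : ℝ) + 1) ^ (-γ) := by
  calc (n : ℝ) ^ (1 - γ) = ∑ _k ∈ range n, (n : ℝ) ^ (-γ) := by
        rw [sub_eq_add_neg, rpow_add' n.cast_nonneg (by linarith), rpow_one, sum_const,
          card_range, nsmul_eq_mul]
    _ ≤ ∑ k ∈ range n, ((k : ℝ) + 1) ^ (-γ) := by
        refine sum_le_sum fun k hk => rpow_le_rpow_of_nonpos (by positivity) ?_ (by linarith)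
        exact_mod_cast mem_range.1 hk

theorem prod_one_sub_inv_mul_rpow_le {C γ : ℝ} (hC : 1 ≤ C) (hγ0 : 0 ≤ γ) (hγ1 : γ < 1)
    (n : ℕ) : ∏ k ∈ range n, (1 - 1 / (C * ((k : ℝ) + 1) ^ γ)) ≤ exp (-C⁻¹ * n ^ (1 - γ)) := by
  have hterm : ∀ k : ℕ, 1 / (C * ((k : ℝ) + 1) ^ γ) = C⁻¹ * ((k : ℝ) + 1) ^ (-γ) := fun k => by
    rw [rpow_neg (by positivity), one_div, mul_inv]
  refine (prod_one_sub_le_exp_neg_sum _ fun k _ => ?_).trans ?_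
  · rw [div_le_one (by positivity)]
    exact one_le_mul_of_one_le_of_one_le hC (one_le_rpow (by simp) hγ0)
  · rw [exp_le_exp, sum_congr rfl fun k _ => hterm k, ← mul_sum, neg_mul, neg_le_neg_iff]
    exact mul_le_mul_of_nonneg_left (rpow_one_sub_le_sum_rpow_neg hγ0 hγ1 n) (by positivity)

theorem tendsto_mul_exp_neg_mul_rpow {β b : ℝ} (hβ : 0 < β) (hb : 0 < b) :
    Tendsto (fun x : ℝ => x * exp (-b * x ^ β)) atTop (𝓝 0) := by
  refine ((tendsto_rpow_mul_exp_neg_mul_atTop_nhds_zero β⁻¹ b hb).comp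
    (tendsto_rpow_atTop hβ)).congr' ?_
  filter_upwards [eventually_ge_atTop 0] with x hx
  simp [rpow_rpow_inv hx hβ.ne']

theorem exists_succ_mul_exp_neg_mul_rpow_le {β b : ℝ} (hβ : 0 < β) (hb : 0 < b) :
    ∃ M, ∀ n : ℕ, (n + 1) * exp (-b * (n : ℝ) ^ β) ≤ M := by
  obtain ⟨M, hM⟩ :=
    ((tendsto_mul_exp_neg_mul_rpow hβ hb).comp tendsto_natCast_atTop_atTop).bddAbove_range
  refine ⟨M + 1, fun n => ?_⟩
  have hexp : exp (-b * (n : ℝ) ^ β) ≤ 1 := by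
    rw [exp_le_one_iff, neg_mul, neg_nonpos]; positivity
  have := hM ⟨n, rfl⟩
  simp only [Function.comp_apply] at this
  linarith [add_mul (n : ℝ) 1 (exp (-b * (n : ℝ) ^ β))]

theorem stmt8_general (C κ α : ℝ) (hC : 1 ≤ C) (hκ : 0 < κ) (hα : α ∈ Set.Ioo (0:ℝ) (1/3))
    (G : ℕ → ℝ)
    (hrec : ∀ n : ℕ,
      G (n+1) ≤ (1 - 1 / (C * ((n:ℝ) + 1) ^ (3*α))) * G n + C * Real.exp (-κ * n / 2))
    (hθ0 : Real.exp (-κ/2) ≤ 1 - 1 / (C * ((0:ℝ) + 1) ^ (3*α)))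
    (hθmono : ∀ n : ℕ,
      1 - 1 / (C * ((0:ℝ) + 1) ^ (3*α)) ≤ 1 - 1 / (C * ((n:ℝ) + 1) ^ (3*α)))
    (hG0 : G 0 ≤ C) :
    ∃ c > (0:ℝ), ∃ C' : ℝ, ∀ n : ℕ, G n ≤ C' * Real.exp (-c * (n:ℝ) ^ (1 - 3*α)) := by
  obtain ⟨hα0, hα1⟩ := hα
  set θ : ℕ → ℝ := fun k => 1 - 1 / (C * ((k : ℝ) + 1) ^ (3 * α))
  have hθ : ∀ k, exp (-(κ / 2)) ≤ θ k := fun k => by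
    simpa only [neg_div] using hθ0.trans (hθmono k)
  set E := exp (κ / 2)
  have hforce (n : ℕ) : C * exp (-κ * n / 2) ≤ C * E * ∏ k ∈ range (n + 1), θ k := by
    rw [mul_assoc]
    gcongr
    calc exp (-κ * n / 2) = E * exp (-(κ / 2) * ((n + 1 : ℕ) : ℝ)) := by
          rw [← exp_add]; push_cast; ring_nf
      _ ≤ E * ∏ k ∈ range (n + 1), θ k := by gcongr; exact exp_neg_mul_le_prod hθ (n + 1)
  have hG := le_succ_mul_mul_prod_of_le_mul_add (D := C * E) (fun k => (exp_pos _).le.trans (hθ k))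
    (hG0.trans (le_mul_of_one_le_right (by linarith) (one_le_exp (by positivity))))
    (fun n => (hrec n).trans (add_le_add_right (hforce n) _))
  set c := (2 * C)⁻¹
  obtain ⟨M, hM⟩ := exists_succ_mul_exp_neg_mul_rpow_le (β := 1 - 3 * α) (b := c)
    (by linarith) (by positivity)
  refine ⟨c, by positivity, C * E * M, fun n => ?_⟩
  calc G n ≤ (n + 1) * (C * E) * ∏ k ∈ range n, θ k := hG n
    _ ≤ (n + 1) * (C * E) * exp (-C⁻¹ * n ^ (1 - 3 * α)) := by
        gcongr; exact prod_one_sub_inv_mul_rpow_le hC (by linarith) (by linarith) n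
    _ = C * E * ((n + 1) * exp (-c * n ^ (1 - 3 * α))) * exp (-c * n ^ (1 - 3 * α)) := by
        rw [show -C⁻¹ * (n : ℝ) ^ (1 - 3 * α) = -c * n ^ (1 - 3 * α) + -c * n ^ (1 - 3 * α) by
          simp only [c]; field_simp; ring, exp_add]
        ring
    _ ≤ C * E * M * exp (-c * n ^ (1 - 3 * α)) := by gcongr; exact hM n

/-- If `G_{n+1} ≤ θₙ Gₙ + C e^{−κn/2}` with `θₙ = 1 − 1/(C(n+1)^{3α})`,
`e^{−κ/2} ≤ θ₀ ≤ θₙ`, and `G₀ ≤ C`, then `Gₙ ≤ C' exp(−c n^{1−3α})`. -/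
theorem stmt8 (C κ α : ℝ) (hC : 1 ≤ C) (hκ : 0 < κ) (hα : α ∈ Set.Ioo (0:ℝ) (1/3))
    (G : ℕ → ℝ) (hG : ∀ n, 0 ≤ G n)
    (hrec : ∀ n : ℕ,
      G (n+1) ≤ (1 - 1 / (C * ((n:ℝ) + 1) ^ (3*α))) * G n + C * Real.exp (-κ * n / 2))
    (hθ0 : Real.exp (-κ/2) ≤ 1 - 1 / (C * ((0:ℝ) + 1) ^ (3*α)))
    (hθmono : ∀ n : ℕ,
      1 - 1 / (C * ((0:ℝ) + 1) ^ (3*α)) ≤ 1 - 1 / (C * ((n:ℝ) + 1) ^ (3*α)))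
    (hG0 : G 0 ≤ C) :
    ∃ c > (0:ℝ), ∃ C' : ℝ, ∀ n : ℕ, G n ≤ C' * Real.exp (-c * (n:ℝ) ^ (1 - 3*α)) :=
  stmt8_general C κ α hC hκ hα G hrec hθ0 hθmono hG0
end
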